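/- For every integer k ≥ 0 and any finite set system F, γ₂(AC_k(F)) ≤ k · γ₂(F). -/

import Mathlib

open scoped BigOperators

noncomputable def rowMax {α : Type*} [Fintype α] {r : ℕ} (U : Matrix α (Fin r) ℝ) : ℝ :=
  ⨆ i, Real.sqrt (∑ j, (U i j) ^ 2)

noncomputable def colMax {β : Type*} [Fintype β] {r : ℕ} (V : Matrix (Fin r) β ℝ) : ℝ :=
  ⨆ j, Real.sqrt (∑ i, (V i j) ^ 2)

noncomputable def gamma2 {α β : Type*} [Fintype α] [Fintype β] (A : Matrix α β ℝ) : ℝ :=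
  sInf {t : ℝ | ∃ (r : ℕ) (U : Matrix α (Fin r) ℝ) (V : Matrix (Fin r) β ℝ),
    A = U * V ∧ t = rowMax U * colMax V}

noncomputable def incidenceMatrix {α : Type*} [Fintype α] [DecidableEq α]
    (F : Finset (Finset α)) : Matrix {S // S ∈ F} α ℝ :=
  Matrix.of fun S p => if p ∈ S.1 then (1 : ℝ) else 0

noncomputable def gamma2Sys {α : Type*} [Fintype α] [DecidableEq α]
    (F : Finset (Finset α)) : ℝ :=
  gamma2 (incidenceMatrix F)

/-- `AC F k S` means `S` is an admissible `k`-composition of sets of `F`. -/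
inductive AC {α : Type*} [DecidableEq α] (F : Finset (Finset α)) : ℕ → Finset α → Prop
  | base {S : Finset α} : S ∈ F → AC F 1 S
  | union {k₁ k₂ : ℕ} {S₁ S₂ : Finset α} :
      AC F k₁ S₁ → AC F k₂ S₂ → Disjoint S₁ S₂ → AC F (k₁ + k₂) (S₁ ∪ S₂)
  | sdiff {k₁ k₂ : ℕ} {S₁ S₂ : Finset α} :
      AC F k₁ S₁ → AC F k₂ S₂ → S₂ ⊆ S₁ → AC F (k₁ + k₂) (S₁ \ S₂)

open Classical in
/-- The set system of all admissible `k`-compositions of sets from `F`. -/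
noncomputable def ACk {α : Type*} [Fintype α] [DecidableEq α]
    (F : Finset (Finset α)) (k : ℕ) : Finset (Finset α) :=
  Finset.univ.filter fun S => AC F k S

/-!
Every admissible `k`-composition `S` of sets of `F` has an indicator vector of the form
`∑ T ∈ F, c T • 𝟙_T` with `∑ T ∈ F, |c T| ≤ k`: unions of disjoint sets add indicators and
differences of nested sets subtract them. Hence `incidenceMatrix (ACk F k) = C * incidenceMatrix F`
with rows of `C` of `ℓ¹`-norm at most `k`, and left multiplication by such a `C` turns any
factorization `U * V` into `(C * U) * V`, scaling the largest row norm of `U` by at most `k`.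
-/

lemma norm_toLp_eq_sqrt_sum_sq {ι : Type*} [Fintype ι] (v : ι → ℝ) :
    ‖WithLp.toLp 2 v‖ = √(∑ i, v i ^ 2) := by
  simp [EuclideanSpace.norm_eq]

section Gamma2

variable {α β γ : Type*} [Fintype α] [Fintype β] [Fintype γ] {r : ℕ}

lemma rowMax_nonneg (U : Matrix α (Fin r) ℝ) : 0 ≤ rowMax U :=
  Real.iSup_nonneg fun _ => Real.sqrt_nonneg _

lemma colMax_nonneg (V : Matrix (Fin r) β ℝ) : 0 ≤ colMax V :=
  Real.iSup_nonneg fun _ => Real.sqrt_nonneg _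

lemma norm_toLp_row_le_rowMax (U : Matrix α (Fin r) ℝ) (a : α) :
    ‖WithLp.toLp 2 (U a)‖ ≤ rowMax U := by
  rw [norm_toLp_eq_sqrt_sum_sq]
  exact le_ciSup (f := fun a => √(∑ j, U a j ^ 2)) (Set.finite_range _).bddAbove a

lemma rowMax_mul_le (C : Matrix γ α ℝ) (U : Matrix α (Fin r) ℝ) {c : ℝ} (hc : 0 ≤ c)
    (hC : ∀ i, ∑ j, |C i j| ≤ c) : rowMax (C * U) ≤ c * rowMax U := by
  refine Real.iSup_le (fun i => ?_) (mul_nonneg hc (rowMax_nonneg U))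
  have hrow : WithLp.toLp 2 ((C * U) i) = ∑ j, C i j • WithLp.toLp 2 (U j) := by
    ext l
    simp [Matrix.mul_apply]
  calc √(∑ l, (C * U) i l ^ 2) = ‖∑ j, C i j • WithLp.toLp 2 (U j)‖ := by
        rw [← hrow, norm_toLp_eq_sqrt_sum_sq]
    _ ≤ ∑ j, |C i j| * rowMax U := by
        refine (norm_sum_le _ _).trans (Finset.sum_le_sum fun j _ => ?_)
        rw [norm_smul, Real.norm_eq_abs]
        exact mul_le_mul_of_nonneg_left (norm_toLp_row_le_rowMax U j) (abs_nonneg _)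
    _ ≤ c * rowMax U := by
        rw [← Finset.sum_mul]
        exact mul_le_mul_of_nonneg_right (hC i) (rowMax_nonneg U)

theorem gamma2_mul_le (C : Matrix γ α ℝ) (A : Matrix α β ℝ) {c : ℝ} (hc : 0 ≤ c)
    (hC : ∀ i, ∑ j, |C i j| ≤ c) : gamma2 (C * A) ≤ c * gamma2 A := by
  classical
  unfold gamma2
  let e := Fintype.equivFin β
  have hne : {t : ℝ | ∃ (r : ℕ) (U : Matrix α (Fin r) ℝ) (V : Matrix (Fin r) β ℝ),
      A = U * V ∧ t = rowMax U * colMax V}.Nonempty :=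
    ⟨_, _, A.submatrix id e.symm, (1 : Matrix β β ℝ).submatrix e.symm id,
      by rw [Matrix.submatrix_mul_equiv, Matrix.mul_one, Matrix.submatrix_id_id], rfl⟩
  rw [← smul_eq_mul, ← Real.sInf_smul_of_nonneg hc]
  refine le_csInf hne.smul_set ?_
  rintro _ ⟨_, ⟨r, U, V, rfl, rfl⟩, rfl⟩
  refine csInf_le_of_le ⟨0, ?_⟩ ⟨r, C * U, V, (Matrix.mul_assoc _ _ _).symm, rfl⟩ ?_
  · rintro _ ⟨_, U, V, -, rfl⟩
    exact mul_nonneg (rowMax_nonneg U) (colMax_nonneg V)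
  · show _ ≤ c * (rowMax U * colMax V)
    rw [← mul_assoc]
    exact mul_le_mul_of_nonneg_right (rowMax_mul_le C U hc hC) (colMax_nonneg V)

end Gamma2

section AdmissibleComposition

variable {α : Type*} [DecidableEq α] {F : Finset (Finset α)}

theorem AC.exists_indicator_eq_sum {k : ℕ} {S : Finset α} (h : AC F k S) :
    ∃ c : Finset α → ℝ, ∑ T ∈ F, |c T| ≤ k ∧
      ∀ p, (if p ∈ S then (1 : ℝ) else 0) = ∑ T ∈ F, c T * if p ∈ T then 1 else 0 := by
  induction h with
  | @base S hS =>
    refine ⟨fun T => if T = S then 1 else 0, ?_, fun p => ?_⟩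
    · simp [apply_ite, Finset.sum_ite_eq', hS]
    · simp only [ite_mul, one_mul, zero_mul, Finset.sum_ite_eq', if_pos hS]
  | @union k₁ k₂ S₁ S₂ _ _ hdisj ih₁ ih₂ =>
    obtain ⟨c₁, hc₁, hS₁⟩ := ih₁
    obtain ⟨c₂, hc₂, hS₂⟩ := ih₂
    refine ⟨c₁ + c₂, ?_, fun p => ?_⟩
    · calc ∑ T ∈ F, |(c₁ + c₂) T| ≤ ∑ T ∈ F, (|c₁ T| + |c₂ T|) :=
            Finset.sum_le_sum fun T _ => abs_add_le _ _
        _ ≤ (k₁ + k₂ : ℕ) := by push_cast; rw [Finset.sum_add_distrib]; exact add_le_add hc₁ hc₂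
    · simp only [Pi.add_apply, add_mul, Finset.sum_add_distrib, ← hS₁, ← hS₂]
      have : p ∈ S₁ → p ∉ S₂ := fun hp => Finset.disjoint_left.mp hdisj hp
      by_cases h₁ : p ∈ S₁ <;> by_cases h₂ : p ∈ S₂ <;> simp_all
  | @sdiff k₁ k₂ S₁ S₂ _ _ hsub ih₁ ih₂ =>
    obtain ⟨c₁, hc₁, hS₁⟩ := ih₁
    obtain ⟨c₂, hc₂, hS₂⟩ := ih₂
    refine ⟨c₁ - c₂, ?_, fun p => ?_⟩
    · calc ∑ T ∈ F, |(c₁ - c₂) T| ≤ ∑ T ∈ F, (|c₁ T| + |c₂ T|) :=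
            Finset.sum_le_sum fun T _ => abs_sub _ _
        _ ≤ (k₁ + k₂ : ℕ) := by push_cast; rw [Finset.sum_add_distrib]; exact add_le_add hc₁ hc₂
    · simp only [Pi.sub_apply, sub_mul, Finset.sum_sub_distrib, ← hS₁, ← hS₂]
      have : p ∈ S₂ → p ∈ S₁ := @hsub p
      by_cases h₁ : p ∈ S₁ <;> by_cases h₂ : p ∈ S₂ <;> simp_all

theorem exists_incidenceMatrix_ACk_eq_mul [Fintype α] (F : Finset (Finset α)) (k : ℕ) :
    ∃ C : Matrix {S // S ∈ ACk F k} {T // T ∈ F} ℝ,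
      (∀ S, ∑ T, |C S T| ≤ k) ∧ incidenceMatrix (ACk F k) = C * incidenceMatrix F := by
  have hAC (S : {S // S ∈ ACk F k}) : AC F k S := by
    classical exact (Finset.mem_filter.mp S.2).2
  choose c hc hS using fun S => (hAC S).exists_indicator_eq_sum
  refine ⟨Matrix.of fun S T => c S T, fun S => ?_, ?_⟩
  · simpa only [Matrix.of_apply, Finset.sum_coe_sort F (fun T => |c S T|)] using hc S
  · ext S p
    simp only [incidenceMatrix, Matrix.mul_apply, Matrix.of_apply]
    rw [Finset.sum_coe_sort F fun T => c S T * if p ∈ T then 1 else 0]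
    exact hS S p

end AdmissibleComposition

/-- `γ₂(AC_k(F)) ≤ k ⬝ γ₂(F)`. -/
theorem gamma2_ACk_le {α : Type*} [Fintype α] [DecidableEq α]
    (F : Finset (Finset α)) (k : ℕ) :
    gamma2Sys (ACk F k) ≤ k * gamma2Sys F := by
  obtain ⟨C, hC, hmul⟩ := exists_incidenceMatrix_ACk_eq_mul F k
  rw [gamma2Sys, gamma2Sys, hmul]
  exact gamma2_mul_le C _ k.cast_nonneg hC
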